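/- Let 𝓘 and 𝓐 be finite index sets. Let g_M{}^N{}_P{}^Q be a real tensor, set f_M{}^N{}_P{}^Q = g_M{}^N{}_P{}^Q − 2 δ_M^N δ_P^Q, and define h_{(M,a)}{}^{(N,b)}{}_{(P,c)}{}^{(Q,d)} = g_M{}^N{}_P{}^Q δ^a_b δ^c_d − δ_M^N δ_P^Q δ^a_b δ^c_d + δ_M^N δ_P^Q δ^c_b δ^a_d for a, b, c, d ∈ 𝓐. Define families of tensors recursively: f_1(M; N) = δ_M^N, and for p ≥ 2, f_p(M1⋯Mp; N1⋯Np) = Σ_{1≤i<j≤p} (−1)^{i+p} Σ_P f_{Mi}{}^{N1}{}_{Mj}{}^P · f_{p−1}(M1⋯M(i−1) M(i+1)⋯M(j−1) P M(j+1)⋯Mp; N2⋯Np) − Σ_P f_{Mp}{}^{N1}{}_{M(p−1)}{}^P · f_{p−1}(M1⋯M(p−2) P; N2⋯Np); similarly h_1((M,a); (N,b)) = δ_M^N δ^a_b, and for p ≥ 2, h_p is defined by the same recursion over the doubled index set 𝓘 × 𝓐 using h in place of f (with the contracted index a pair (P,e) ∈ 𝓘 × 𝓐), except that the prefactor (−1)^{i+p}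 in the double sum is replaced by +1 (the final term keeps coefficient −1). Then for every p ≥ 1, antisymmetrizing h_p over its 𝓐-indices a1, …, ap (attached to M1, …, Mp) gives h_p(M1 a1 ⋯ Mp ap; N1 b1 ⋯ Np bp)^{[a1⋯ap]} = (−1)^{p(p−1)/2} δ^{[a1⋯ap]}_{b1⋯bp} · f_p(M1⋯Mp; N1⋯Np), where X^{[a1⋯ap]} = (1/p!) Σ_{σ ∈ S_p} sgn(σ) X^{aσ(1)⋯aσ(p)} and δ^{[a1⋯ap]}_{b1⋯bp} = (1/p!) Σ_{σ ∈ S_p} sgn(σ) δ^{aσ(1)}_{b1} ⋯ δ^{aσ(p)}_{bp}. -/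

import Mathlib

/-!
Induction on `p`. Insert the definition of `h` into the recursion for `h_p`. After the
contraction over the `𝓐`-part of the summation index, the `g − δδ` part of `h` leaves the
`𝓐`-indices in place, while the `δδ` part is the same term with `a_i` and `a_j` exchanged.
Antisymmetrization therefore gives it the opposite sign, and the two parts add up to
`g − 2δδ = f`. What remains is a single `δ^{a_i}_{b1}` times an `h_{p−1}`. Expanding the
antisymmetrization along the slot `i` (a Laplace expansion) and applying the induction hypothesis
to each `h_{p−1}` reassembles `δ^{[a1⋯ap]}_{b1⋯bp}`. The expansion contributes the sign
`(−1)^{i−1}`, and together with `(−1)^{p(p−1)/2} = (−1)^{(p−1)(p−2)/2} (−1)^{p−1}` this gives the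
prefactor `(−1)^{i+p}` of the `f`-recursion. The last term of the recursion is a term of the same
shape with `i = p`, `j = p − 1`, whose sign `(−1)^{p−1} (−1)^{p−1} = 1` matches as well.
-/

open Equiv Finset

/-- The recursively defined family of tensors (eq. (3.31)): `recTensor f4 sign 1` is the
Kronecker delta, and
`recTensor f4 sign p (M1⋯Mp) (N1⋯Np) = Σ_{i<j} sign(i, p) Σ_P f4(Mi, N1, Mj, P) ·
recTensor f4 sign (p−1) (M1⋯M(i−1)M(i+1)⋯M(j−1)PM(j+1)⋯Mp) (N2⋯Np)
− Σ_P f4(Mp, N1, M(p−1), P) · recTensor f4 sign (p−1) (M1⋯M(p−2)P) (N2⋯Np)`,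
where in each term of the double sum the `i`-th lower index is removed and the `j`-th
lower index is replaced by the contracted index `P`. Here `sign i p` receives the
`0`-based Lean index `i`. -/
def recTensor {κ : Type} [Fintype κ] [DecidableEq κ]
    (f4 : κ → κ → κ → κ → ℝ) (sign : ℕ → ℕ → ℝ) :
    (p : ℕ) → (Fin p → κ) → (Fin p → κ) → ℝ
  | 0, _, _ => 1
  | 1, M, N => if M 0 = N 0 then 1 else 0
  | (k + 2), M, N =>
      (∑ i : Fin (k + 2), ∑ j : Fin (k + 2),
        if i < j then
          sign (i : ℕ) (k + 2) *
            ∑ Pq : κ, f4 (M i) (N 0) (M j) Pq *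
              recTensor f4 sign (k + 1)
                (Function.update (fun t : Fin (k + 1) => M (i.succAbove t))
                  ⟨(j : ℕ) - 1, by have := j.isLt; omega⟩ Pq)
                (Fin.tail N)
        else 0)
      - ∑ Pq : κ, f4 (M (Fin.last (k + 1))) (N 0) (M ⟨k, by omega⟩) Pq *
          recTensor f4 sign (k + 1)
            (Fin.snoc (fun t : Fin k => M ⟨(t : ℕ), by have := t.isLt; omega⟩) Pq)
            (Fin.tail N)

local notation "δ[" x ", " y "]" => if x = y then (1 : ℝ) else 0

section Alternating

variable {A : Type} {n m : ℕ}

/-- `altSum F a = n! · F(a)^{[a1⋯an]}`: the antisymmetrization in `a`, without the `1 / n!`. -/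
noncomputable def altSum (F : (Fin n → A) → ℝ) (a : Fin n → A) : ℝ :=
  ∑ σ : Perm (Fin n), ((Perm.sign σ : ℤ) : ℝ) * F (fun t => a (σ t))

lemma altSum_add (F G : (Fin n → A) → ℝ) (a : Fin n → A) :
    altSum (fun c => F c + G c) a = altSum F a + altSum G a := by
  simp only [altSum, mul_add, sum_add_distrib]

lemma altSum_sub (F G : (Fin n → A) → ℝ) (a : Fin n → A) :
    altSum (fun c => F c - G c) a = altSum F a - altSum G a := by
  simp only [altSum, mul_sub, sum_sub_distrib]

lemma altSum_const_mul (r : ℝ) (F : (Fin n → A) → ℝ) (a : Fin n → A) :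
    altSum (fun c => r * F c) a = r * altSum F a := by
  simp only [altSum, mul_sum, mul_left_comm]

lemma altSum_sum {β : Type} (s : Finset β) (F : β → (Fin n → A) → ℝ) (a : Fin n → A) :
    altSum (fun c => ∑ x ∈ s, F x c) a = ∑ x ∈ s, altSum (F x) a := by
  simp only [altSum, mul_sum]
  exact sum_comm

lemma altSum_ite_zero (p : Prop) [Decidable p] (F : (Fin n → A) → ℝ) (a : Fin n → A) :
    altSum (fun c => if p then F c else 0) a = if p then altSum F a else 0 := by
  split_ifs <;> simp [altSum]

lemma altSum_comp_perm (π : Perm (Fin n)) (F : (Fin n → A) → ℝ) (a : Fin n → A) :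
    altSum (fun c => F (fun t => c (π t))) a = (Perm.sign π : ℝ) * altSum F a := by
  rw [altSum, altSum, mul_sum]
  refine Fintype.sum_equiv (Equiv.mulRight π) _ _ fun σ => ?_
  rcases Int.units_eq_one_or (Perm.sign π) with h | h <;>
    simp [Perm.sign_mul, h, Perm.mul_apply]

def succAbovePerm (i q : Fin (m + 1)) (τ : Perm (Fin m)) : Perm (Fin (m + 1)) :=
  q.cycleRange⁻¹ * Perm.decomposeFin.symm (0, τ) * i.cycleRange

lemma succAbovePerm_apply_self (i q : Fin (m + 1)) (τ : Perm (Fin m)) :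
    succAbovePerm i q τ i = q := by
  simp [succAbovePerm, Perm.inv_def]

lemma succAbovePerm_apply_succAbove (i q : Fin (m + 1)) (τ : Perm (Fin m)) (t : Fin m) :
    succAbovePerm i q τ (i.succAbove t) = q.succAbove (τ t) := by
  simp [succAbovePerm, Perm.inv_def, Fin.cycleRange_symm_succ]

lemma sign_succAbovePerm (i q : Fin (m + 1)) (τ : Perm (Fin m)) :
    ((Perm.sign (succAbovePerm i q τ) : ℤ) : ℝ) = (-1) ^ (i + q : ℕ) * (Perm.sign τ : ℝ) := by
  rw [succAbovePerm, map_mul, map_mul, Perm.sign_inv, Fin.sign_cycleRange, Fin.sign_cycleRange,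
    Perm.decomposeFin.symm_sign, if_pos rfl, one_mul]
  push_cast
  ring

lemma bijective_succAbovePerm (i : Fin (m + 1)) :
    Function.Bijective fun x : Fin (m + 1) × Perm (Fin m) => succAbovePerm i x.1 x.2 := by
  refine (Fintype.bijective_iff_injective_and_card _).2 ⟨?_, ?_⟩
  · rintro ⟨q, τ⟩ ⟨q', τ'⟩ h
    have hq : q = q' := by
      simpa only [succAbovePerm_apply_self] using DFunLike.congr_fun h i
    subst hq
    refine Prod.ext rfl (Equiv.ext fun t => Fin.succAbove_right_injective (p := q) ?_)
    simpa only [succAbovePerm_apply_succAbove] using DFunLike.congr_fun h (i.succAbove t)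
  · simp [Fintype.card_perm, Nat.factorial_succ]

/-- Laplace expansion along the slot `i`: group the permutations by the value `q = σ i`. -/
lemma altSum_mul_comp_succAbove (i : Fin (m + 1)) (φ : A → ℝ) (Ψ : (Fin m → A) → ℝ)
    (a : Fin (m + 1) → A) :
    altSum (fun c => φ (c i) * Ψ (fun t => c (i.succAbove t))) a
      = ∑ q : Fin (m + 1),
          (-1) ^ (i + q : ℕ) * φ (a q) * altSum Ψ (fun t => a (q.succAbove t)) := by
  rw [altSum, ← (bijective_succAbovePerm i).sum_comp, Fintype.sum_prod_type]
  refine sum_congr rfl fun q _ => ?_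
  simp only [sign_succAbovePerm, succAbovePerm_apply_self, succAbovePerm_apply_succAbove,
    altSum, mul_sum]
  exact sum_congr rfl fun τ _ => by ring

noncomputable def deltaProd [DecidableEq A] (b c : Fin n → A) : ℝ :=
  ∏ t, δ[c t, b t]

lemma altSum_deltaProd_succ [DecidableEq A] (a b : Fin (m + 1) → A) :
    altSum (deltaProd b) a = ∑ q : Fin (m + 1), (-1) ^ (q : ℕ) * δ[a q, b 0] *
      altSum (deltaProd (Fin.tail b)) (fun t => a (q.succAbove t)) := by
  have h := altSum_mul_comp_succAbove 0 (fun x => δ[x, b 0])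
    (deltaProd (Fin.tail b)) a
  simp only [Fin.val_zero, zero_add, Fin.succAbove_zero] at h
  rw [← h]
  congr 1
  funext c
  simp only [deltaProd, Fin.prod_univ_succ]
  rfl

lemma altSum_mul_update_succAbove (i : Fin (m + 2)) (j : Fin (m + 1)) (φ : A → ℝ)
    (Ψ : (Fin (m + 1) → A) → ℝ) (a : Fin (m + 2) → A) :
    altSum (fun c => φ (c (i.succAbove j)) *
        Ψ (Function.update (fun t => c (i.succAbove t)) j (c i))) a
      = -altSum (fun c => φ (c i) * Ψ (fun t => c (i.succAbove t))) a := by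
  have hswap : (fun c : Fin (m + 2) → A => φ (c (i.succAbove j)) *
        Ψ (Function.update (fun t => c (i.succAbove t)) j (c i)))
      = fun c => (fun c' => φ (c' i) * Ψ (fun t => c' (i.succAbove t)))
          (fun t => c (swap i (i.succAbove j) t)) := by
    funext c
    simp only [swap_apply_left]
    congr 2
    funext t
    rcases eq_or_ne t j with rfl | htj
    · simp
    · rw [Function.update_of_ne htj, swap_apply_of_ne_of_ne (Fin.succAbove_ne i t)
        (Fin.succAbove_right_injective.ne htj)]
  rw [hswap, altSum_comp_perm _ (fun c => φ (c i) * Ψ fun t => c (i.succAbove t)),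
    Perm.sign_swap (Fin.succAbove_ne i j).symm]
  simp

end Alternating

section Contraction

variable {ι A : Type} [DecidableEq ι] [Fintype A] [DecidableEq A] {m : ℕ}

/-- One term of the recursion (3.31): `i` is the removed slot and `j` the position, after the
removal, of the slot that receives the contracted index `P`. -/
noncomputable def contractTerm {κ : Type} [Fintype κ] (T : κ → κ → κ → κ → ℝ)
    (R : (Fin (m + 1) → κ) → (Fin (m + 1) → κ) → ℝ) (i : Fin (m + 2)) (j : Fin (m + 1))
    (M N : Fin (m + 2) → κ) : ℝ :=
  ∑ P, T (M i) (N 0) (M (i.succAbove j)) P *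
    R (Function.update (fun t => M (i.succAbove t)) j P) (Fin.tail N)

lemma sum_h4_mul (g : ι → ι → ι → ι → ℝ) (h4 : (ι × A) → (ι × A) → (ι × A) → (ι × A) → ℝ)
    (hh4 : ∀ (M N P Q : ι) (a b c d : A), h4 (M, a) (N, b) (P, c) (Q, d)
      = g M N P Q * δ[a, b] * δ[c, d] - δ[M, N] * δ[P, Q] * δ[a, b] * δ[c, d]
        + δ[M, N] * δ[P, Q] * δ[c, b] * δ[a, d])
    (M N P Q : ι) (a b c : A) (F : A → ℝ) :
    ∑ d, h4 (M, a) (N, b) (P, c) (Q, d) * F d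
      = (g M N P Q - δ[M, N] * δ[P, Q]) * (δ[a, b] * F c)
        + δ[M, N] * δ[P, Q] * (δ[c, b] * F a) := by
  have hd : ∀ d, h4 (M, a) (N, b) (P, c) (Q, d) * F d
      = (g M N P Q - δ[M, N] * δ[P, Q]) * δ[a, b] * (δ[c, d] * F d)
        + δ[M, N] * δ[P, Q] * δ[c, b] * (δ[a, d] * F d) := fun d => by rw [hh4]; ring
  have hδ : ∀ x, ∑ d, δ[x, d] * F d = F x := fun x => by simp only [boole_mul, Fintype.sum_ite_eq]
  simp only [hd, sum_add_distrib, ← mul_sum, hδ]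
  ring

lemma altSum_contractTerm [Fintype ι] (g f4 : ι → ι → ι → ι → ℝ)
    (hf4 : ∀ M N P Q : ι, f4 M N P Q = g M N P Q - 2 * δ[M, N] * δ[P, Q])
    (h4 : (ι × A) → (ι × A) → (ι × A) → (ι × A) → ℝ)
    (hh4 : ∀ (M N P Q : ι) (a b c d : A), h4 (M, a) (N, b) (P, c) (Q, d)
      = g M N P Q * δ[a, b] * δ[c, d] - δ[M, N] * δ[P, Q] * δ[a, b] * δ[c, d]
        + δ[M, N] * δ[P, Q] * δ[c, b] * δ[a, d])
    (Rh : (Fin (m + 1) → ι × A) → (Fin (m + 1) → ι × A) → ℝ)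
    (Rf : (Fin (m + 1) → ι) → (Fin (m + 1) → ι) → ℝ) (s : ℝ)
    (ih : ∀ (M N : Fin (m + 1) → ι) (a b : Fin (m + 1) → A),
      altSum (fun c => Rh (fun t => (M t, c t)) (fun t => (N t, b t))) a
        = s * altSum (deltaProd b) a * Rf M N)
    (i : Fin (m + 2)) (j : Fin (m + 1)) (M N : Fin (m + 2) → ι) (a b : Fin (m + 2) → A) :
    altSum (fun c => contractTerm h4 Rh i j (fun t => (M t, c t)) (fun t => (N t, b t))) a
      = (-1) ^ (i : ℕ) * s * altSum (deltaProd b) a * contractTerm f4 Rf i j M N := by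
  set Mc : ι → Fin (m + 1) → ι := fun P => Function.update (fun t => M (i.succAbove t)) j P
  set Ψ : ι → (Fin (m + 1) → A) → ℝ :=
    fun P c => Rh (fun t => (Mc P t, c t)) (fun t => (N t.succ, b t.succ))
  set δδ : ι → ℝ := fun P => δ[M i, N 0] * δ[M (i.succAbove j), P]
  have hpair : ∀ c : Fin (m + 2) → A,
      contractTerm h4 Rh i j (fun t => (M t, c t)) (fun t => (N t, b t))
        = ∑ P, ((g (M i) (N 0) (M (i.succAbove j)) P - δδ P) *
              (δ[c i, b 0] * Ψ P (fun t => c (i.succAbove t)))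
            + δδ P * (δ[c (i.succAbove j), b 0] *
              Ψ P (Function.update (fun t => c (i.succAbove t)) j (c i)))) := by
    intro c
    rw [contractTerm, Fintype.sum_prod_type]
    refine sum_congr rfl fun P _ => ?_
    have hupdate : ∀ e, Function.update (fun t => (M (i.succAbove t), c (i.succAbove t))) j (P, e)
        = fun t => (Mc P t, Function.update (fun t => c (i.succAbove t)) j e t) :=
      fun e => funext fun t => (Function.apply_update₂ (fun _ => Prod.mk)
        (fun t => M (i.succAbove t)) (fun t => c (i.succAbove t)) j P e t).symm
    simp only [hupdate]
    rw [sum_h4_mul g h4 hh4, Function.update_eq_self]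
    rfl
  have hexpand : ∀ P, altSum (fun c => δ[c i, b 0] * Ψ P (fun t => c (i.succAbove t))) a
      = (-1) ^ (i : ℕ) * s * altSum (deltaProd b) a * Rf (Mc P) (Fin.tail N) := by
    intro P
    rw [altSum_mul_comp_succAbove i (fun x => δ[x, b 0]) (Ψ P) a, altSum_deltaProd_succ,
      mul_sum, sum_mul]
    refine sum_congr rfl fun q _ => ?_
    rw [show altSum (Ψ P) (fun t => a (q.succAbove t))
        = s * altSum (deltaProd (Fin.tail b)) (fun t => a (q.succAbove t)) * Rf (Mc P) (Fin.tail N)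
      from ih _ _ _ _, pow_add]
    ring
  simp only [hpair]
  rw [altSum_sum]
  have hswap : ∀ P, altSum (fun c => δ[c (i.succAbove j), b 0] *
      Ψ P (Function.update (fun t => c (i.succAbove t)) j (c i))) a
      = -altSum (fun c => δ[c i, b 0] * Ψ P (fun t => c (i.succAbove t))) a :=
    fun P => altSum_mul_update_succAbove i j (fun x => δ[x, b 0]) (Ψ P) a
  simp only [altSum_add, altSum_const_mul, hswap, hexpand, contractTerm, hf4, mul_sum]
  refine sum_congr rfl fun P _ => ?_
  ring

end Contraction

section Recursion

variable {κ : Type} [Fintype κ] [DecidableEq κ]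

lemma recTensor_add_two (T : κ → κ → κ → κ → ℝ) (sign : ℕ → ℕ → ℝ) (k : ℕ)
    (M N : Fin (k + 2) → κ) :
    recTensor T sign (k + 2) M N
      = (∑ i : Fin (k + 2), ∑ j : Fin (k + 2), if i < j then
            sign i (k + 2) * contractTerm T (recTensor T sign (k + 1)) i
              ⟨(j : ℕ) - 1, by have := j.isLt; omega⟩ M N
          else 0)
        - contractTerm T (recTensor T sign (k + 1)) (Fin.last (k + 1)) (Fin.last k) M N := by
  rw [recTensor]
  congr 1
  · refine sum_congr rfl fun i _ => sum_congr rfl fun j _ => ?_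
    split_ifs with hij
    · have hj : i.succAbove ⟨(j : ℕ) - 1, by have := j.isLt; omega⟩ = j :=
        Fin.succAbove_pred_of_lt i j hij
      rw [contractTerm, hj]
    · rfl
  · have hsnoc : ∀ P, (Fin.snoc (fun t : Fin k => M ⟨(t : ℕ), by have := t.isLt; omega⟩) P
        : Fin (k + 1) → κ)
        = Function.update (fun t => M ((Fin.last (k + 1)).succAbove t)) (Fin.last k) P := by
      intro P
      rw [Fin.succAbove_last, ← Fin.snoc_init_self (fun t => M (Fin.castSucc t)),
        Fin.update_snoc_last]
      rfl
    simp only [contractTerm, hsnoc, Fin.succAbove_last]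
    rfl

end Recursion

theorem altSum_recTensor {ι A : Type} [Fintype ι] [DecidableEq ι] [Fintype A] [DecidableEq A]
    (g f4 : ι → ι → ι → ι → ℝ)
    (hf4 : ∀ M N P Q : ι, f4 M N P Q = g M N P Q - 2 * δ[M, N] * δ[P, Q])
    (h4 : (ι × A) → (ι × A) → (ι × A) → (ι × A) → ℝ)
    (hh4 : ∀ (M N P Q : ι) (a b c d : A), h4 (M, a) (N, b) (P, c) (Q, d)
      = g M N P Q * δ[a, b] * δ[c, d] - δ[M, N] * δ[P, Q] * δ[a, b] * δ[c, d]
        + δ[M, N] * δ[P, Q] * δ[c, b] * δ[a, d])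
    (k : ℕ) (M N : Fin (k + 1) → ι) (a b : Fin (k + 1) → A) :
    altSum (fun c => recTensor h4 (fun _ _ => 1) (k + 1) (fun t => (M t, c t))
        (fun t => (N t, b t))) a
      = (-1) ^ ((k + 1) * (k + 1 - 1) / 2) * altSum (deltaProd b) a *
          recTensor f4 (fun i p => (-1) ^ (i + 1 + p)) (k + 1) M N := by
  induction k with
  | zero =>
    simp [altSum, deltaProd, recTensor, ite_and]
  | succ k ih =>
    have hcontr := altSum_contractTerm g f4 hf4 h4 hh4 _ _ _ ih
    simp only [recTensor_add_two, altSum_sub, altSum_sum, altSum_ite_zero, hcontr, one_mul]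
    have hsign : ∀ i : ℕ, (-1 : ℝ) ^ (k + 1) * (-1) ^ (i + 1 + (k + 2)) = (-1) ^ i := by
      intro i
      rw [← pow_add, show k + 1 + (i + 1 + (k + 2)) = i + 2 * (k + 2) by ring, pow_add, pow_mul]
      norm_num
    rw [Nat.triangle_succ (k + 1), pow_add, mul_sub, mul_sum]
    congr 1
    · refine sum_congr rfl fun i _ => ?_
      rw [mul_sum]
      refine sum_congr rfl fun j _ => ?_
      split_ifs
      · rw [← hsign]
        ring
      · simp
    · rw [Fin.val_last]
      ring

/-- With `f = g − 2δδ`, `h` the doubled-index tensor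
`h_{(M,a)}{}^{(N,b)}{}_{(P,c)}{}^{(Q,d)} = g_M{}^N{}_P{}^Q δ^a_b δ^c_d
− δ_M^N δ_P^Q δ^a_b δ^c_d + δ_M^N δ_P^Q δ^c_b δ^a_d`, `f_p` the recursively defined
family with prefactor `(−1)^{i+p}` (paper indexing: Lean index `i` corresponds to the
paper index `i + 1`), and `h_p` the analogous family over the doubled index set with
prefactor `+1`, antisymmetrizing `h_p` over the `𝓐`-indices attached to `M1, …, Mp`
gives `h_p^{[a1⋯ap]} = (−1)^{p(p−1)/2} δ^{[a1⋯ap]}_{b1⋯bp} f_p`. -/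
theorem antisymmetrized_levelp_tensor
    {ι : Type} [Fintype ι] [DecidableEq ι]
    {A : Type} [Fintype A] [DecidableEq A]
    (g f4 : ι → ι → ι → ι → ℝ)
    (hf4 : ∀ M N P Q : ι, f4 M N P Q
      = g M N P Q - 2 * (if M = N then (1 : ℝ) else 0) * (if P = Q then (1 : ℝ) else 0))
    (h4 : (ι × A) → (ι × A) → (ι × A) → (ι × A) → ℝ)
    (hh4 : ∀ (M N P Q : ι) (a b c d : A), h4 (M, a) (N, b) (P, c) (Q, d)
      = g M N P Q * (if a = b then (1 : ℝ) else 0) * (if c = d then (1 : ℝ) else 0)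
        - (if M = N then (1 : ℝ) else 0) * (if P = Q then (1 : ℝ) else 0) *
            (if a = b then (1 : ℝ) else 0) * (if c = d then (1 : ℝ) else 0)
        + (if M = N then (1 : ℝ) else 0) * (if P = Q then (1 : ℝ) else 0) *
            (if c = b then (1 : ℝ) else 0) * (if a = d then (1 : ℝ) else 0)) :
    ∀ p : ℕ, 1 ≤ p → ∀ (M N : Fin p → ι) (a b : Fin p → A),
      (p.factorial : ℝ)⁻¹ *
          ∑ σ : Equiv.Perm (Fin p), ((Equiv.Perm.sign σ : ℤ) : ℝ) *
            recTensor h4 (fun _ _ => 1) p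
              (fun t => (M t, a (σ t))) (fun t => (N t, b t))
        = (-1 : ℝ) ^ (p * (p - 1) / 2) *
            ((p.factorial : ℝ)⁻¹ *
              ∑ σ : Equiv.Perm (Fin p), ((Equiv.Perm.sign σ : ℤ) : ℝ) *
                ∏ t : Fin p, (if a (σ t) = b t then (1 : ℝ) else 0)) *
            recTensor f4 (fun i p' => (-1 : ℝ) ^ (i + 1 + p')) p M N := by
  intro p hp M N a b
  obtain ⟨k, rfl⟩ := Nat.exists_eq_add_of_le' hp
  have h := altSum_recTensor g f4 hf4 h4 hh4 k M N a b
  simp only [altSum, deltaProd] at h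
  rw [h]
  ring
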